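/- If f is an allocation mechanism such that for every valuation profile V there exists a permutation π with f(V) = RR_π(V), then f is an EF1 mechanism. -/

import Mathlib

/-!
Along round robin the remaining goods shrink, so an agent values the good picked at any turn at
least as much as every good picked later. If `a` picks `d > 0` turns before `b` in every round,
shifting each turn of `b` back by `d` lands on a turn of `a` and pairs every good of `b` with a
better good of `a`; this covers all of `b`'s bundle when `a < b` (with `d = b - a`) and all but
`b`'s very first pick when `b < a` (with `d = n + b - a`).
-/

open Finset

/-- Tie-breaking argmax: the smallest index in `C` attaining the maximum of `v` on `C`. -/
noncomputable def pickTB (v : ℕ → ℝ) (C : Finset ℕ) : ℕ :=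
  if h : (C.filter fun j => ∀ j' ∈ C, v j' ≤ v j).Nonempty
  then (C.filter fun j => ∀ j' ∈ C, v j' ≤ v j).min' h
  else 0

/-- Remaining goods before turn `t` of round robin; at turn `t` agent `t % n` picks. -/
noncomputable def rrRem (v : ℕ → ℕ → ℝ) (n m : ℕ) : ℕ → Finset ℕ
  | 0 => Finset.range m
  | t + 1 => (rrRem v n m t).erase (pickTB (v (t % n)) (rrRem v n m t))

/-- The good picked at turn `t` of round robin. -/
noncomputable def rrPickAt (v : ℕ → ℕ → ℝ) (n m t : ℕ) : ℕ :=
  pickTB (v (t % n)) (rrRem v n m t)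

/-- The bundle allocated to agent `i` by round robin. -/
noncomputable def rrBundle (v : ℕ → ℕ → ℝ) (n m i : ℕ) : Finset ℕ :=
  ((Finset.range m).filter fun t => t % n = i).image (rrPickAt v n m)

/-- Additive valuation of a bundle. -/
noncomputable def bundleValue (vi : ℕ → ℝ) (S : Finset ℕ) : ℝ := ∑ j ∈ S, vi j

/-- Bundle of agent `i` under round robin induced by the permutation `π`. -/
noncomputable def rrPerm (v : ℕ → ℕ → ℝ) (n m : ℕ) (π : Equiv.Perm ℕ) (i : ℕ) :
    Finset ℕ :=
  rrBundle (fun i' => v (π.symm i')) n m (π i)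


lemma pickTB_mem_and_le {v : ℕ → ℝ} {C : Finset ℕ} (hC : C.Nonempty) :
    pickTB v C ∈ C ∧ ∀ j ∈ C, v j ≤ v (pickTB v C) := by
  obtain ⟨b, hb, hmax⟩ := exists_max_image C v hC
  have hne : (C.filter fun j => ∀ j' ∈ C, v j' ≤ v j).Nonempty := ⟨b, mem_filter.2 ⟨hb, hmax⟩⟩
  rw [pickTB, dif_pos hne]
  exact mem_filter.1 (min'_mem _ hne)

lemma ef1_of_bundleValue_erase_le {w : ℕ → ℝ} {A B : Finset ℕ} {o : ℕ}
    (h : bundleValue w (B.erase o) ≤ bundleValue w A) :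
    bundleValue w A ≥ bundleValue w B ∨ ∃ o ∈ B, bundleValue w A ≥ bundleValue w (B.erase o) := by
  by_cases ho : o ∈ B
  · exact Or.inr ⟨o, ho, h⟩
  · exact Or.inl (by rwa [erase_eq_of_notMem ho] at h)

lemma bundleValue_mono {w : ℕ → ℝ} (hw : ∀ j, 0 ≤ w j) {S T : Finset ℕ} (h : S ⊆ T) :
    bundleValue w S ≤ bundleValue w T :=
  sum_le_sum_of_subset_of_nonneg h fun j _ _ => hw j

section RoundRobin

variable (v : ℕ → ℕ → ℝ) (n m : ℕ)

lemma rrRem_antitone : Antitone (rrRem v n m) :=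
  antitone_nat_of_succ_le fun _ => erase_subset _ _

lemma card_rrRem {t : ℕ} (h : t ≤ m) : (rrRem v n m t).card = m - t := by
  induction t with
  | zero => simp [rrRem]
  | succ t ih =>
    have hne : (rrRem v n m t).Nonempty := card_pos.1 (by rw [ih (by omega)]; omega)
    rw [rrRem, card_erase_of_mem (pickTB_mem_and_le hne).1, ih (by omega)]
    omega

lemma rrRem_nonempty {t : ℕ} (h : t < m) : (rrRem v n m t).Nonempty :=
  card_pos.1 (by rw [card_rrRem v n m h.le]; omega)

lemma rrPickAt_mem {t : ℕ} (h : t < m) : rrPickAt v n m t ∈ rrRem v n m t :=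
  (pickTB_mem_and_le (rrRem_nonempty v n m h)).1

lemma rrPickAt_mem_rrRem_succ_of_lt {t s : ℕ} (hts : t < s) (hs : s < m) :
    rrPickAt v n m s ∈ rrRem v n m (t + 1) :=
  rrRem_antitone v n m hts (rrPickAt_mem v n m hs)

lemma rrPickAt_injOn : Set.InjOn (rrPickAt v n m) (Set.Iio m) := by
  have key : ∀ {t s}, t < s → s < m → rrPickAt v n m t ≠ rrPickAt v n m s := fun hts hs he =>
    notMem_erase _ _ (he ▸ rrPickAt_mem_rrRem_succ_of_lt v n m hts hs)
  intro t ht s hs he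
  by_contra hne
  rcases Nat.lt_or_gt_of_ne hne with hts | hst
  · exact key hts hs he
  · exact key hst ht he.symm

lemma rrPickAt_le_of_lt {t s : ℕ} (hts : t < s) (hs : s < m) :
    v (t % n) (rrPickAt v n m s) ≤ v (t % n) (rrPickAt v n m t) :=
  (pickTB_mem_and_le (rrRem_nonempty v n m (hts.trans hs))).2 _
    (rrRem_antitone v n m hts.le (rrPickAt_mem v n m hs))

lemma bundleValue_image_rrPickAt {w : ℕ → ℝ} {T : Finset ℕ} (hT : T ⊆ range m) :
    bundleValue w (T.image (rrPickAt v n m)) = ∑ t ∈ T, w (rrPickAt v n m t) :=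
  sum_image ((rrPickAt_injOn v n m).mono fun _ ht => mem_range.1 (hT ht))

lemma bundleValue_image_le_rrBundle {a d : ℕ} (ha : a < n) (hv : ∀ j, 0 ≤ v a j) (hd : 0 < d)
    {T : Finset ℕ} (hT : ∀ t ∈ T, d ≤ t ∧ t < m ∧ t ≡ a + d [MOD n]) :
    bundleValue (v a) (T.image (rrPickAt v n m)) ≤ bundleValue (v a) (rrBundle v n m a) := by
  have hshift : ∀ t ∈ T, t - d < m ∧ (t - d) % n = a := fun t ht => by
    obtain ⟨hdt, htm, htmod⟩ := hT t ht
    have : t - d ≡ a [MOD n] := Nat.ModEq.add_right_cancel' d (by rwa [Nat.sub_add_cancel hdt])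
    exact ⟨by omega, Eq.trans this (Nat.mod_eq_of_lt ha)⟩
  have hsub : T.image (· - d) ⊆ (range m).filter fun t => t % n = a := fun s hs => by
    obtain ⟨t, ht, rfl⟩ := mem_image.1 hs
    exact mem_filter.2 ⟨mem_range.2 (hshift t ht).1, (hshift t ht).2⟩
  have hinj : Set.InjOn (· - d) (T : Set ℕ) := fun t ht s hs h => by
    have := (hT t ht).1
    have := (hT s hs).1
    simp only at h
    omega
  have hearlier : ∀ t ∈ T, v a (rrPickAt v n m t) ≤ v a (rrPickAt v n m (t - d)) := fun t ht => by
    have := rrPickAt_le_of_lt v n m (t := t - d) (by have := (hT t ht).1; omega) (hT t ht).2.1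
    rwa [(hshift t ht).2] at this
  calc bundleValue (v a) (T.image (rrPickAt v n m))
      ≤ ∑ t ∈ T, v a (rrPickAt v n m t) := sum_image_le_of_nonneg fun j _ => hv j
    _ ≤ ∑ t ∈ T, v a (rrPickAt v n m (t - d)) := sum_le_sum hearlier
    _ = ∑ s ∈ T.image (· - d), v a (rrPickAt v n m s) := by rw [sum_image hinj]
    _ = bundleValue (v a) ((T.image (· - d)).image (rrPickAt v n m)) :=
        (bundleValue_image_rrPickAt v n m (hsub.trans (filter_subset _ _))).symm
    _ ≤ bundleValue (v a) (rrBundle v n m a) := bundleValue_mono hv (image_subset_image hsub)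

lemma rrBundle_ef1 {a b : ℕ} (ha : a < n) (hb : b < n) (hv : ∀ j, 0 ≤ v a j) :
    bundleValue (v a) (rrBundle v n m a) ≥ bundleValue (v a) (rrBundle v n m b) ∨
      ∃ o ∈ rrBundle v n m b,
        bundleValue (v a) (rrBundle v n m a) ≥ bundleValue (v a) ((rrBundle v n m b).erase o) := by
  have hturn : ∀ t ∈ (range m).filter fun t => t % n = b, t < m ∧ t % n = b := fun t ht =>
    ⟨mem_range.1 (mem_filter.1 ht).1, (mem_filter.1 ht).2⟩
  rcases lt_trichotomy a b with hab | rfl | hba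
  · left
    refine bundleValue_image_le_rrBundle v n m (d := b - a) ha hv (by omega) fun t ht => ?_
    obtain ⟨htm, htb⟩ := hturn t ht
    refine ⟨by have := Nat.mod_le t n; omega, htm, ?_⟩
    rw [Nat.ModEq, htb, Nat.add_sub_cancel' hab.le, Nat.mod_eq_of_lt hb]
  · exact Or.inl le_rfl
  · apply ef1_of_bundleValue_erase_le (o := rrPickAt v n m b)
    refine (bundleValue_mono hv (erase_image_subset_image_erase _ _ _)).trans
      (bundleValue_image_le_rrBundle v n m (d := n + b - a) ha hv (by omega) fun t ht => ?_)
    obtain ⟨htb', htm, htb⟩ := (mem_erase.1 ht).imp_right (hturn t)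
    have hlater_round : n ≤ t - b := Nat.le_of_dvd (by have := Nat.mod_le t n; omega) <|
      (Nat.modEq_iff_dvd' (htb ▸ Nat.mod_le t n)).1 (by rw [Nat.ModEq, htb, Nat.mod_eq_of_lt hb])
    refine ⟨by omega, htm, ?_⟩
    rw [Nat.ModEq, htb, Nat.add_sub_cancel' (by omega), Nat.add_mod_left, Nat.mod_eq_of_lt hb]

end RoundRobin

/-- if an allocation mechanism `f` agrees on every (additive, nonnegative)
valuation profile with `RR_π` for some permutation `π` of the agents, then `f` is an
EF1 mechanism: it outputs an EF1 allocation on every input. -/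
theorem ef1_of_pointwise_rrPerm (n m : ℕ)
    (f : (ℕ → ℕ → ℝ) → ℕ → Finset ℕ)
    (hf : ∀ v : ℕ → ℕ → ℝ, (∀ i j, 0 ≤ v i j) →
      ∃ π : Equiv.Perm ℕ, (∀ i, i < n ↔ π i < n) ∧
        ∀ i, i < n → f v i = rrPerm v n m π i) :
    ∀ v : ℕ → ℕ → ℝ, (∀ i j, 0 ≤ v i j) →
      ∀ i, i < n → ∀ j, j < n →
        bundleValue (v i) (f v i) ≥ bundleValue (v i) (f v j) ∨
          ∃ o ∈ f v j,
            bundleValue (v i) (f v i) ≥ bundleValue (v i) ((f v j).erase o) := by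
  intro v hv i hi j hj
  obtain ⟨π, hπ, hfπ⟩ := hf v hv
  have := rrBundle_ef1 (fun k => v (π.symm k)) n m ((hπ i).1 hi) ((hπ j).1 hj) fun _ => hv _ _
  simpa only [hfπ i hi, hfπ j hj, rrPerm, Equiv.symm_apply_apply] using this
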